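/- arXiv:1109.0815 — 3 statements merged into one kernel-verified Lean document; each statement's English description precedes it below -/
import Mathlib

section
/- The polytope Q_p^{x̃,y,z} = conv{(x̃(x), y(x), z(x)) : x a vertex of Orb(p)} equals the set of points (x̃, y, z) ∈ ℝ^{p×2} × ℝ^p × ℝ^p satisfying: x̃_{i,1} − Σ_{k<i} y_k ≤ 0 and x̃_{i,2} − Σ_{k<i} y_k ≤ 0 for all i ∈ [p]; Σ_{k≤i} y_k + z_i ≤ 1 for all i ∈ [p]; and x̃_{i,j}, y_i, z_i ≥ 0 for all i ∈ [p], j ∈ [2]. -/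
open scoped Classical
open Finset

noncomputable section

/-- The vertices of the orbisack: 0/1 `p×2`-matrices whose first column is
lexicographically greater than or equal to the second column. -/
def OrbVerts (p : ℕ) : Set (Fin p → Fin 2 → ℝ) :=
  {x | (∀ i j, x i j = 0 ∨ x i j = 1) ∧
       ∀ i : Fin p, (∀ k, k < i → x k 0 = x k 1) → x i 1 ≤ x i 0}

/-- The orbisack `Orb(p)`. -/
def Orbisack (p : ℕ) : Set (Fin p → Fin 2 → ℝ) :=
  convexHull ℝ (OrbVerts p)

/-- The critical row of a vertex (0-indexed; equal to `p` if the columns coincide). -/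
def critRow {p : ℕ} (x : Fin p → Fin 2 → ℝ) : ℕ :=
  sInf ({i : ℕ | ∃ h : i < p, x ⟨i, h⟩ 0 = 1 ∧ x ⟨i, h⟩ 1 = 0} ∪ {p})

/-- `y(x)`: the unit vector marking the critical row (zero if there is none). -/
def yVec {p : ℕ} (x : Fin p → Fin 2 → ℝ) : Fin p → ℝ :=
  fun i => if (i : ℕ) = critRow x then 1 else 0

/-- `x̃(x)`: the entries of `x` strictly below the critical row. -/
def xTilde {p : ℕ} (x : Fin p → Fin 2 → ℝ) : Fin p → Fin 2 → ℝ :=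
  fun i j => if critRow x < (i : ℕ) then x i j else 0

/-- `z(x)`: the (coinciding) entries of `x` strictly above the critical row. -/
def zVec {p : ℕ} (x : Fin p → Fin 2 → ℝ) : Fin p → ℝ :=
  fun i => if (i : ℕ) < critRow x then x i 0 else 0

/-- `Σ_{k<i} y_k`. -/
def ySumLT {p : ℕ} (y : Fin p → ℝ) (i : Fin p) : ℝ :=
  ∑ k ∈ Finset.univ.filter (fun k : Fin p => k < i), y k

/-- `Σ_{k≤i} y_k`. -/
def ySumLE {p : ℕ} (y : Fin p → ℝ) (i : Fin p) : ℝ :=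
  ∑ k ∈ Finset.univ.filter (fun k : Fin p => k ≤ i), y k

/-- Feasible vectors `τ ∈ {0,1,2,3}^p` (extended by `0` beyond `p`): `τ_0 = 3` and
there is an index `i*` with `τ_{i'} ≠ 0` for `i' < i*`, `τ_{i*} = 3`, and `τ_{i'} = 0`
for `i' > i*`. -/
def FeasibleTau (p : ℕ) (τ : ℕ → ℕ) : Prop :=
  τ 0 = 3 ∧ (∀ i < p, τ i ≤ 3) ∧ (∀ i, p ≤ i → τ i = 0) ∧
  ∃ i < p, (∀ i' < i, τ i' ≠ 0) ∧ τ i = 3 ∧ ∀ i', i < i' → τ i' = 0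

/-- `i* = max{i : τ_i ≠ 0}`. -/
def iStar (τ : ℕ → ℕ) : ℕ := sSup {i | τ i ≠ 0}

/-- The coefficients `α_i` associated with a feasible `τ` (downward recursion from `i*`). -/
def alphaFun (τ : ℕ → ℕ) (istar : ℕ) (i : ℕ) : ℕ :=
  if istar < i then 0
  else if i = istar ∨ i + 1 = istar then 1
  else if τ (i + 1) = 3 then 2 * alphaFun τ istar (i + 1) else alphaFun τ istar (i + 1)
termination_by istar - i
decreasing_by all_goals omega

/-- `α(τ)`. -/
def alphaTau (τ : ℕ → ℕ) (i : ℕ) : ℕ := alphaFun τ (iStar τ) i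

/-- The coefficient matrix `a(τ)` of the block inequality. -/
def aMat (τ : ℕ → ℕ) (i : ℕ) (j : Fin 2) : ℝ :=
  if τ i = 1 then (if j = 0 then (alphaTau τ i : ℝ) else 0)
  else if τ i = 2 then (if j = 0 then 0 else -(alphaTau τ i : ℝ))
  else if τ i = 3 then (if j = 0 then (alphaTau τ i : ℝ) else -(alphaTau τ i : ℝ))
  else 0

/-- The right-hand side `β(τ) = Σ_{i : τ_i = 2} α_i`. -/
def betaTau (p : ℕ) (τ : ℕ → ℕ) : ℝ :=
  ∑ i ∈ Finset.range p, if τ i = 2 then (alphaTau τ i : ℝ) else 0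

/-- The block inequality `⟨-a(τ), x⟩ ≤ β(τ)`. -/
def BlockIneq (p : ℕ) (τ : ℕ → ℕ) (x : Fin p → Fin 2 → ℝ) : Prop :=
  ∑ i : Fin p, (-(aMat τ (i : ℕ) 0) * x i 0 + -(aMat τ (i : ℕ) 1) * x i 1) ≤ betaTau p τ

/-- The linear system describing `Q_p^{x,y}`. -/
def QxySystem (p : ℕ) : Set ((Fin p → Fin 2 → ℝ) × (Fin p → ℝ)) :=
  {w | ∀ i : Fin p,
    w.1 i 0 ≤ 1 ∧
    0 ≤ w.1 i 1 ∧
    0 ≤ w.2 i ∧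
    w.1 i 0 - w.1 i 1 - ySumLT w.2 i ≤ w.2 i ∧
    w.2 i ≤ w.1 i 0 ∧
    w.2 i ≤ 1 - w.1 i 1 ∧
    w.2 i ≤ w.1 i 0 - w.1 i 1 + ySumLT w.2 i ∧
    w.2 i ≤ 1 - ySumLT w.2 i}

end

section Helpers

variable {p : ℕ}

lemma critRow_le (x : Fin p → Fin 2 → ℝ) : critRow x ≤ p :=
  Nat.sInf_le (Set.mem_union_right _ rfl)

lemma critRow_spec (x : Fin p → Fin 2 → ℝ) (h : critRow x < p) :
    x ⟨critRow x, h⟩ 0 = 1 ∧ x ⟨critRow x, h⟩ 1 = 0 := by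
  have hne : ({i : ℕ | ∃ h : i < p, x ⟨i, h⟩ 0 = 1 ∧ x ⟨i, h⟩ 1 = 0} ∪ {p}).Nonempty :=
    ⟨p, Set.mem_union_right _ rfl⟩
  have hmem := Nat.sInf_mem hne
  rw [show sInf ({i : ℕ | ∃ h : i < p, x ⟨i, h⟩ 0 = 1 ∧ x ⟨i, h⟩ 1 = 0} ∪ {p}) = critRow x
      from rfl] at hmem
  rcases hmem with h' | h'
  · obtain ⟨hlt, h1, h0⟩ := h'
    exact ⟨h1, h0⟩
  · exfalso
    have : critRow x = p := h'
    omega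

lemma critRow_not_lt (x : Fin p → Fin 2 → ℝ) (i : Fin p) (h : (i : ℕ) < critRow x) :
    ¬(x i 0 = 1 ∧ x i 1 = 0) := by
  intro hc
  have hm : (i : ℕ) ∈ ({j : ℕ | ∃ h : j < p, x ⟨j, h⟩ 0 = 1 ∧ x ⟨j, h⟩ 1 = 0} ∪ {p}) :=
    Or.inl ⟨i.isLt, by simpa using hc⟩
  have := Nat.sInf_le hm
  rw [show sInf ({j : ℕ | ∃ h : j < p, x ⟨j, h⟩ 0 = 1 ∧ x ⟨j, h⟩ 1 = 0} ∪ {p}) = critRow x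
      from rfl] at this
  omega

lemma critRow_eq_of (x : Fin p → Fin 2 → ℝ) (c : ℕ)
    (hmem : c ∈ ({j : ℕ | ∃ h : j < p, x ⟨j, h⟩ 0 = 1 ∧ x ⟨j, h⟩ 1 = 0} ∪ {p}))
    (hlow : ∀ a < c, ¬ ∃ h : a < p, x ⟨a, h⟩ 0 = 1 ∧ x ⟨a, h⟩ 1 = 0) (hcp : c ≤ p) :
    critRow x = c := by
  have h1 : critRow x ≤ c := Nat.sInf_le hmem
  have h2 : c ≤ critRow x := by
    by_contra hlt
    push_neg at hlt
    have hne : ({j : ℕ | ∃ h : j < p, x ⟨j, h⟩ 0 = 1 ∧ x ⟨j, h⟩ 1 = 0} ∪ {p}).Nonempty :=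
      ⟨p, Set.mem_union_right _ rfl⟩
    have hmem' := Nat.sInf_mem hne
    rw [show sInf ({j : ℕ | ∃ h : j < p, x ⟨j, h⟩ 0 = 1 ∧ x ⟨j, h⟩ 1 = 0} ∪ {p}) = critRow x
        from rfl] at hmem'
    rcases hmem' with h' | h'
    · exact hlow (critRow x) hlt h'
    · have : critRow x = p := h'
      omega
  omega

lemma rows_eq_of_lt_critRow (x : Fin p → Fin 2 → ℝ) (hx : x ∈ OrbVerts p) (i : Fin p)
    (h : (i : ℕ) < critRow x) : x i 0 = x i 1 := by
  have key : ∀ n, ∀ i : Fin p, (i : ℕ) = n → (i : ℕ) < critRow x → x i 0 = x i 1 := by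
    intro n
    induction n using Nat.strong_induction_on with
    | _ n IH =>
      intro i hi h
      have hle : x i 1 ≤ x i 0 := hx.2 i (fun k hk => by
        have hkn : (k : ℕ) < n := by rw [← hi]; exact hk
        exact IH (k : ℕ) hkn k rfl (lt_trans (by omega) h))
      rcases hx.1 i 0 with h0 | h0 <;> rcases hx.1 i 1 with h1 | h1
      · rw [h0, h1]
      · exfalso; rw [h0, h1] at hle; linarith
      · exfalso; exact critRow_not_lt x i h ⟨h0, h1⟩
      · rw [h0, h1]
  exact key (i : ℕ) i rfl h

lemma ySumLE_eq (f : Fin p → ℝ) (i : Fin p) : ySumLE f i = ySumLT f i + f i := by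
  unfold ySumLE ySumLT
  rw [show Finset.univ.filter (fun k : Fin p => k ≤ i)
      = insert i (Finset.univ.filter (fun k : Fin p => k < i)) from by
    ext k; simp [le_iff_lt_or_eq, or_comm]]
  rw [Finset.sum_insert (by simp)]
  ring

lemma ySumLT_yVec (x : Fin p → Fin 2 → ℝ) (i : Fin p) :
    ySumLT (yVec x) i = if critRow x < (i : ℕ) then 1 else 0 := by
  unfold ySumLT yVec
  by_cases h : critRow x < (i : ℕ)
  · rw [if_pos h]
    have hcp : critRow x < p := lt_trans h i.isLt
    set c : Fin p := ⟨critRow x, hcp⟩ with hc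
    have hcond : ∀ k : Fin p, ((k : ℕ) = critRow x) ↔ (k = c) := by
      intro k
      constructor
      · intro hh; exact Fin.ext hh
      · intro hh; rw [hh]
    calc ∑ k ∈ Finset.univ.filter (fun k : Fin p => k < i),
            (if (k : ℕ) = critRow x then (1:ℝ) else 0)
        = ∑ k ∈ Finset.univ.filter (fun k : Fin p => k < i), (if k = c then (1:ℝ) else 0) := by
          exact Finset.sum_congr rfl fun k _ => if_congr (hcond k) rfl rfl
      _ = 1 := by
          rw [Finset.sum_ite_eq' (Finset.univ.filter (fun k : Fin p => k < i)) c (fun _ => (1:ℝ))]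
          rw [if_pos]
          rw [Finset.mem_filter]
          exact ⟨Finset.mem_univ _, by rw [Fin.lt_def]; exact h⟩
  · rw [if_neg h]
    apply Finset.sum_eq_zero
    intro k hk
    rw [Finset.mem_filter] at hk
    have : (k : ℕ) < (i : ℕ) := hk.2
    rw [if_neg (by omega)]

lemma ySumLT_smul_add (a b : ℝ) (y1 y2 : Fin p → ℝ) (i : Fin p) :
    ySumLT (a • y1 + b • y2) i = a * ySumLT y1 i + b * ySumLT y2 i := by
  unfold ySumLT
  rw [Finset.mul_sum, Finset.mul_sum, ← Finset.sum_add_distrib]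
  exact Finset.sum_congr rfl fun k _ => by simp

lemma ySumLE_smul_add (a b : ℝ) (y1 y2 : Fin p → ℝ) (i : Fin p) :
    ySumLE (a • y1 + b • y2) i = a * ySumLE y1 i + b * ySumLE y2 i := by
  unfold ySumLE
  rw [Finset.mul_sum, Finset.mul_sum, ← Finset.sum_add_distrib]
  exact Finset.sum_congr rfl fun k _ => by simp

lemma vertex_mem_rhs (x : Fin p → Fin 2 → ℝ) (hx : x ∈ OrbVerts p) (i : Fin p) :
    xTilde x i 0 ≤ ySumLT (yVec x) i ∧
    xTilde x i 1 ≤ ySumLT (yVec x) i ∧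
    ySumLE (yVec x) i + zVec x i ≤ 1 ∧
    (∀ j, 0 ≤ xTilde x i j) ∧ 0 ≤ yVec x i ∧ 0 ≤ zVec x i := by
  have h01 : ∀ i j, 0 ≤ x i j ∧ x i j ≤ 1 := fun i j => by
    rcases hx.1 i j with h | h <;> simp [h]
  rw [ySumLE_eq, ySumLT_yVec]
  unfold xTilde yVec zVec
  refine ⟨?_, ?_, ?_, ?_, ?_, ?_⟩
  · split_ifs with h
    · exact (h01 i 0).2
    · exact le_refl 0
  · split_ifs with h
    · exact (h01 i 1).2
    · exact le_refl 0
  · rcases Nat.lt_trichotomy (critRow x) (i : ℕ) with h | h | h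
    · rw [if_pos h, if_neg (by omega), if_neg (by omega)]; norm_num
    · rw [if_neg (by omega), if_pos (by omega), if_neg (by omega)]; norm_num
    · rw [if_neg (by omega), if_neg (by omega), if_pos h]
      have := (h01 i 0).2; linarith
  · intro j; split_ifs with h
    · exact (h01 i j).1
    · exact le_refl 0
  · split_ifs <;> norm_num
  · split_ifs with h
    · exact (h01 i 0).1
    · exact le_refl 0

lemma rhs_convex : Convex ℝ {q : (Fin p → Fin 2 → ℝ) × (Fin p → ℝ) × (Fin p → ℝ) | ∀ i : Fin p,
    q.1 i 0 ≤ ySumLT q.2.1 i ∧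
    q.1 i 1 ≤ ySumLT q.2.1 i ∧
    ySumLE q.2.1 i + q.2.2 i ≤ 1 ∧
    (∀ j, 0 ≤ q.1 i j) ∧ 0 ≤ q.2.1 i ∧ 0 ≤ q.2.2 i} := by
  intro q1 hq1 q2 hq2 a b ha hb hab
  intro i
  obtain ⟨A1, A2, A3, A4, A5, A6⟩ := hq1 i
  obtain ⟨B1, B2, B3, B4, B5, B6⟩ := hq2 i
  have hy : (a • q1 + b • q2).2.1 = a • q1.2.1 + b • q2.2.1 := rfl
  have h1 : ∀ j, (a • q1 + b • q2).1 i j = a * q1.1 i j + b * q2.1 i j := fun j => rfl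
  have h2 : (a • q1 + b • q2).2.1 i = a * q1.2.1 i + b * q2.2.1 i := rfl
  have h3 : (a • q1 + b • q2).2.2 i = a * q1.2.2 i + b * q2.2.2 i := rfl
  refine ⟨?_, ?_, ?_, ?_, ?_, ?_⟩
  · rw [h1, hy, ySumLT_smul_add]
    exact add_le_add (mul_le_mul_of_nonneg_left A1 ha) (mul_le_mul_of_nonneg_left B1 hb)
  · rw [h1, hy, ySumLT_smul_add]
    exact add_le_add (mul_le_mul_of_nonneg_left A2 ha) (mul_le_mul_of_nonneg_left B2 hb)
  · rw [h3, hy, ySumLE_smul_add]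
    have ha3 := mul_le_mul_of_nonneg_left A3 ha
    have hb3 := mul_le_mul_of_nonneg_left B3 hb
    nlinarith
  · intro j
    rw [h1]
    exact add_nonneg (mul_nonneg ha (A4 j)) (mul_nonneg hb (B4 j))
  · rw [h2]
    exact add_nonneg (mul_nonneg ha A5) (mul_nonneg hb B5)
  · rw [h3]
    exact add_nonneg (mul_nonneg ha A6) (mul_nonneg hb B6)

/-- The convex multipliers: `y` entries, padded with the slack `1 - Σ y` at index `p`. -/
noncomputable def muFun {p : ℕ} (y : Fin p → ℝ) : ℕ → ℝ :=
  fun c => if h : c < p then y ⟨c, h⟩ else 1 - ∑ k, y k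

lemma muFun_sum_range (y : Fin p → ℝ) (n : ℕ) (hn : n ≤ p) :
    ∑ c ∈ Finset.range n, muFun y c
      = ∑ k ∈ Finset.univ.filter (fun k : Fin p => (k : ℕ) < n), y k := by
  have h1 : ∑ k ∈ Finset.univ.filter (fun k : Fin p => (k : ℕ) < n), y k
      = ∑ k : Fin p, if (k : ℕ) < n then muFun y (k : ℕ) else 0 := by
    rw [Finset.sum_filter]
    refine Finset.sum_congr rfl fun k _ => ?_
    by_cases h : (k : ℕ) < n
    · rw [if_pos h, if_pos h]
      simp [muFun, k.isLt]
    · rw [if_neg h, if_neg h]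
  rw [h1, Fin.sum_univ_eq_sum_range (fun c => if c < n then muFun y c else 0) p,
    ← Finset.sum_filter]
  congr 1
  ext a
  simp only [Finset.mem_filter, Finset.mem_range]
  omega

lemma boxpoint_mem_hull (c : ℕ) (hc : c ≤ p) (X : Fin p → Fin 2 → ℝ) (Z : Fin p → ℝ)
    (hX1 : ∀ (i : Fin p) (j : Fin 2), c < (i : ℕ) → X i j ∈ Set.Icc (0:ℝ) 1)
    (hX2 : ∀ (i : Fin p) (j : Fin 2), ¬ c < (i : ℕ) → X i j = 0)
    (hZ1 : ∀ i : Fin p, (i : ℕ) < c → Z i ∈ Set.Icc (0:ℝ) 1)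
    (hZ2 : ∀ i : Fin p, ¬ (i : ℕ) < c → Z i = 0) :
    ((X, fun i : Fin p => if (i : ℕ) = c then (1:ℝ) else 0, Z) :
      (Fin p → Fin 2 → ℝ) × (Fin p → ℝ) × (Fin p → ℝ)) ∈
      convexHull ℝ {q : (Fin p → Fin 2 → ℝ) × (Fin p → ℝ) × (Fin p → ℝ) |
        ∃ x ∈ OrbVerts p, q = (xTilde x, yVec x, zVec x)} := by
  set Yc : Fin p → ℝ := fun i => if (i : ℕ) = c then (1:ℝ) else 0 with hYc
  set E : Fin p → Set ℝ := fun i => if c < (i : ℕ) then {0, 1} else {0} with hE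
  set F : Fin p → Set ℝ := fun i => if (i : ℕ) < c then {0, 1} else {0} with hF
  have hsub : ((Set.univ.pi fun i : Fin p => Set.univ.pi fun _ : Fin 2 => E i) ×ˢ
      ({Yc} ×ˢ Set.univ.pi fun i : Fin p => F i)) ⊆
      {q : (Fin p → Fin 2 → ℝ) × (Fin p → ℝ) × (Fin p → ℝ) |
        ∃ x ∈ OrbVerts p, q = (xTilde x, yVec x, zVec x)} := by
    rintro ⟨W, Y, V⟩ ⟨hW, hY, hV⟩
    simp only [Set.mem_pi, Set.mem_univ, true_implies, Set.mem_singleton_iff] at hW hY hV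
    set x : Fin p → Fin 2 → ℝ := fun i j =>
      if (i : ℕ) < c then V i else if (i : ℕ) = c then (if j = 0 then 1 else 0) else W i j
      with hxdef
    have hW01 : ∀ (i : Fin p) (j : Fin 2), W i j = 0 ∨ W i j = 1 := by
      intro i j
      have h := hW i j
      simp only [hE] at h
      by_cases hci : c < (i : ℕ)
      · rw [if_pos hci] at h
        simpa using h
      · rw [if_neg hci] at h
        exact Or.inl h
    have hV01 : ∀ i : Fin p, V i = 0 ∨ V i = 1 := by
      intro i
      have h := hV i
      simp only [hF] at h
      by_cases hci : (i : ℕ) < c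
      · rw [if_pos hci] at h
        simpa using h
      · rw [if_neg hci] at h
        exact Or.inl h
    have hx01 : ∀ (i : Fin p) (j : Fin 2), x i j = 0 ∨ x i j = 1 := by
      intro i j
      simp only [hxdef]
      split_ifs with h1 h2 h3
      · exact hV01 i
      · exact Or.inr rfl
      · exact Or.inl rfl
      · exact hW01 i j
    have hxlt : ∀ (i : Fin p) (j : Fin 2), (i : ℕ) < c → x i j = V i := by
      intro i j h; simp only [hxdef]; rw [if_pos h]
    have hxeq0 : ∀ i : Fin p, (i : ℕ) = c → x i 0 = 1 := by
      intro i h; simp only [hxdef]; rw [if_neg (by omega), if_pos h]; norm_num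
    have hxeq1 : ∀ i : Fin p, (i : ℕ) = c → x i 1 = 0 := by
      intro i h; simp only [hxdef]
      rw [if_neg (by omega), if_pos h]; norm_num
    have hxgt : ∀ (i : Fin p) (j : Fin 2), c < (i : ℕ) → x i j = W i j := by
      intro i j h; simp only [hxdef]; rw [if_neg (by omega), if_neg (by omega)]
    have hxOrb : x ∈ OrbVerts p := by
      refine ⟨hx01, ?_⟩
      intro i hyp
      rcases Nat.lt_trichotomy (i : ℕ) c with h | h | h
      · rw [hxlt i 0 h, hxlt i 1 h]
      · rw [hxeq0 i h, hxeq1 i h]; norm_num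
      · exfalso
        have hcp' : c < p := lt_trans h i.isLt
        have hk : (⟨c, hcp'⟩ : Fin p) < i := by rw [Fin.lt_def]; exact h
        have heq := hyp ⟨c, hcp'⟩ hk
        rw [hxeq0 ⟨c, hcp'⟩ rfl, hxeq1 ⟨c, hcp'⟩ rfl] at heq
        norm_num at heq
    have hcr : critRow x = c := by
      apply critRow_eq_of x c ?_ ?_ hc
      · by_cases h : c < p
        · exact Or.inl ⟨h, hxeq0 ⟨c, h⟩ rfl, hxeq1 ⟨c, h⟩ rfl⟩
        · exact Or.inr (show c = p by omega)
      · rintro a ha ⟨h, h1, h0⟩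
        have hv1 : V ⟨a, h⟩ = 1 := by rw [← hxlt ⟨a, h⟩ 0 ha]; exact h1
        have hv0 : V ⟨a, h⟩ = 0 := by rw [← hxlt ⟨a, h⟩ 1 ha]; exact h0
        rw [hv1] at hv0
        norm_num at hv0
    refine ⟨x, hxOrb, ?_⟩
    have e1 : xTilde x = W := by
      funext i j
      unfold xTilde
      rw [hcr]
      by_cases h : c < (i : ℕ)
      · rw [if_pos h, hxgt i j h]
      · rw [if_neg h]
        have hw := hW i j
        simp only [hE, if_neg h] at hw
        exact (Set.mem_singleton_iff.1 hw).symm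
    have e2 : yVec x = Y := by
      funext i
      unfold yVec
      rw [hcr, hY, hYc]
    have e3 : zVec x = V := by
      funext i
      unfold zVec
      rw [hcr]
      by_cases h : (i : ℕ) < c
      · rw [if_pos h, hxlt i 0 h]
      · rw [if_neg h]
        have hv := hV i
        simp only [hF, if_neg h] at hv
        exact (Set.mem_singleton_iff.1 hv).symm
    rw [e1, e2, e3]
  have hpt : ((X, Yc, Z) : (Fin p → Fin 2 → ℝ) × (Fin p → ℝ) × (Fin p → ℝ)) ∈
      convexHull ℝ ((Set.univ.pi fun i : Fin p => Set.univ.pi fun _ : Fin 2 => E i) ×ˢ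
        ({Yc} ×ˢ Set.univ.pi fun i : Fin p => F i)) := by
    rw [convexHull_prod, convexHull_prod]
    refine ⟨?_, ?_, ?_⟩
    · apply mem_convexHull_pi
      intro i _
      apply mem_convexHull_pi
      intro j _
      by_cases h : c < (i : ℕ)
      · rw [hE]
        simp only [if_pos h]
        rw [convexHull_pair, segment_eq_Icc zero_le_one]
        exact hX1 i j h
      · rw [hE]
        simp only [if_neg h]
        rw [convexHull_singleton]
        exact hX2 i j h
    · exact subset_convexHull ℝ _ rfl
    · apply mem_convexHull_pi
      intro i _
      by_cases h : (i : ℕ) < c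
      · rw [hF]
        simp only [if_pos h]
        rw [convexHull_pair, segment_eq_Icc zero_le_one]
        exact hZ1 i h
      · rw [hF]
        simp only [if_neg h]
        rw [convexHull_singleton]
        exact hZ2 i h
  exact convexHull_mono hsub hpt

end Helpers

/-- Linear description of the polytope `Q_p^{x̃,y,z}`. -/
theorem Qxyz_description (p : ℕ) :
    convexHull ℝ {q : (Fin p → Fin 2 → ℝ) × (Fin p → ℝ) × (Fin p → ℝ) |
        ∃ x ∈ OrbVerts p, q = (xTilde x, yVec x, zVec x)} =
      {q : (Fin p → Fin 2 → ℝ) × (Fin p → ℝ) × (Fin p → ℝ) | ∀ i : Fin p,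
        q.1 i 0 ≤ ySumLT q.2.1 i ∧
        q.1 i 1 ≤ ySumLT q.2.1 i ∧
        ySumLE q.2.1 i + q.2.2 i ≤ 1 ∧
        (∀ j, 0 ≤ q.1 i j) ∧ 0 ≤ q.2.1 i ∧ 0 ≤ q.2.2 i} := by
  apply Set.Subset.antisymm
  · apply convexHull_min
    · rintro q ⟨x, hx, rfl⟩
      intro i
      exact vertex_mem_rhs x hx i
    · exact rhs_convex
  · intro q hq
    simp only [Set.mem_setOf_eq] at hq
    have F1 : ∀ i : Fin p, q.1 i 0 ≤ ySumLT q.2.1 i := fun i => (hq i).1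
    have F2 : ∀ i : Fin p, q.1 i 1 ≤ ySumLT q.2.1 i := fun i => (hq i).2.1
    have F3 : ∀ i : Fin p, ySumLE q.2.1 i + q.2.2 i ≤ 1 := fun i => (hq i).2.2.1
    have F4 : ∀ (i : Fin p) (j : Fin 2), 0 ≤ q.1 i j := fun i => (hq i).2.2.2.1
    have F5 : ∀ i : Fin p, 0 ≤ q.2.1 i := fun i => (hq i).2.2.2.2.1
    have F6 : ∀ i : Fin p, 0 ≤ q.2.2 i := fun i => (hq i).2.2.2.2.2
    set y : Fin p → ℝ := q.2.1 with hydef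
    set z : Fin p → ℝ := q.2.2 with hzdef
    have hS0 : ∀ i : Fin p, 0 ≤ ySumLT y i := fun i =>
      Finset.sum_nonneg fun k _ => F5 k
    have hytot : ∑ k, y k ≤ 1 := by
      rcases Nat.eq_zero_or_pos p with hp | hp
      · have : (Finset.univ : Finset (Fin p)) = ∅ := by
          subst hp; rfl
        rw [this, Finset.sum_empty]; norm_num
      · set i : Fin p := ⟨p - 1, by omega⟩ with hidef
        have he : ySumLE y i = ∑ k, y k := by
          unfold ySumLE
          congr 1
          ext k
          simp only [Finset.mem_filter, Finset.mem_univ, true_and, iff_true]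
          rw [Fin.le_def]
          simp only [hidef]
          omega
        have h3 := F3 i
        have h6 := F6 i
        rw [he] at h3
        linarith
    have hmu0 : ∀ c ∈ Finset.range (p + 1), 0 ≤ muFun y c := by
      intro c _
      by_cases h : c < p
      · simp only [muFun, dif_pos h]
        exact F5 _
      · simp only [muFun, dif_neg h]
        linarith
    have hmusum : ∑ c ∈ Finset.range (p + 1), muFun y c = 1 := by
      rw [Finset.sum_range_succ]
      have h1 : ∑ c ∈ Finset.range p, muFun y c = ∑ k, y k := by
        rw [muFun_sum_range y p le_rfl]
        congr 1
        ext k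
        simp [k.isLt]
      have h2 : muFun y p = 1 - ∑ k, y k := by
        simp [muFun]
      rw [h1, h2]; ring
    have hS : ∀ i : Fin p, ∑ c ∈ Finset.range (i : ℕ), muFun y c = ySumLT y i := by
      intro i
      rw [muFun_sum_range y (i : ℕ) (le_of_lt i.isLt)]
      unfold ySumLT
      congr 1
    have hSE : ∀ i : Fin p, ∑ c ∈ Finset.range ((i : ℕ) + 1), muFun y c = ySumLE y i := by
      intro i
      rw [Finset.sum_range_succ, hS i, ySumLE_eq]
      congr 1
      simp [muFun, i.isLt]
    have hhead : ∀ i : Fin p,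
        ∑ c ∈ Finset.range (p + 1), (if c < (i : ℕ) then muFun y c else 0) = ySumLT y i := by
      intro i
      rw [← Finset.sum_filter]
      rw [show (Finset.range (p + 1)).filter (fun c => c < (i : ℕ)) = Finset.range (i : ℕ) from by
        ext a
        simp only [Finset.mem_filter, Finset.mem_range]
        have := i.isLt
        omega]
      exact hS i
    have htail : ∀ i : Fin p,
        ∑ c ∈ Finset.range (p + 1), (if (i : ℕ) < c then muFun y c else 0)
          = 1 - ySumLE y i := by
      intro i
      have hsplit : ∑ c ∈ Finset.range (p + 1), (if (i : ℕ) < c then muFun y c else 0)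
          + ∑ c ∈ Finset.range (p + 1), (if c ≤ (i : ℕ) then muFun y c else 0)
          = ∑ c ∈ Finset.range (p + 1), muFun y c := by
        rw [← Finset.sum_add_distrib]
        refine Finset.sum_congr rfl fun c _ => ?_
        by_cases h : (i : ℕ) < c
        · rw [if_pos h, if_neg (by omega)]; ring
        · rw [if_neg h, if_pos (by omega)]; ring
      have hhd : ∑ c ∈ Finset.range (p + 1), (if c ≤ (i : ℕ) then muFun y c else 0)
          = ySumLE y i := by
        rw [← Finset.sum_filter]
        rw [show (Finset.range (p + 1)).filter (fun c => c ≤ (i : ℕ))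
            = Finset.range ((i : ℕ) + 1) from by
          ext a
          simp only [Finset.mem_filter, Finset.mem_range]
          have := i.isLt
          omega]
        exact hSE i
      rw [hmusum, hhd] at hsplit
      linarith
    set t : Fin p → Fin 2 → ℝ :=
      fun i j => if ySumLT y i = 0 then 0 else q.1 i j / ySumLT y i with htdef
    set u : Fin p → ℝ :=
      fun i => if 1 - ySumLE y i = 0 then 0 else z i / (1 - ySumLE y i) with hudef
    have hzle : ∀ i : Fin p, z i ≤ 1 - ySumLE y i := fun i => by
      have := F3 i; linarith
    have ht01 : ∀ (i : Fin p) (j : Fin 2), 0 ≤ t i j ∧ t i j ≤ 1 := by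
      intro i j
      simp only [htdef]
      by_cases h : ySumLT y i = 0
      · rw [if_pos h]; norm_num
      · rw [if_neg h]
        have hpos : 0 < ySumLT y i := lt_of_le_of_ne (hS0 i) (Ne.symm h)
        have hle : q.1 i j ≤ ySumLT y i := by
          fin_cases j
          · exact F1 i
          · exact F2 i
        exact ⟨div_nonneg (F4 i j) (le_of_lt hpos), (div_le_one hpos).2 hle⟩
    have hu01 : ∀ i : Fin p, 0 ≤ u i ∧ u i ≤ 1 := by
      intro i
      simp only [hudef]
      by_cases h : 1 - ySumLE y i = 0
      · rw [if_pos h]; norm_num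
      · rw [if_neg h]
        have hnn : 0 ≤ 1 - ySumLE y i := le_trans (F6 i) (hzle i)
        have hpos : 0 < 1 - ySumLE y i := lt_of_le_of_ne hnn (Ne.symm h)
        exact ⟨div_nonneg (F6 i) (le_of_lt hpos), (div_le_one hpos).2 (hzle i)⟩
    set v : ℕ → (Fin p → Fin 2 → ℝ) × (Fin p → ℝ) × (Fin p → ℝ) := fun c =>
      (fun i j => if c < (i : ℕ) then t i j else 0,
       fun i => if (i : ℕ) = c then 1 else 0,
       fun i => if (i : ℕ) < c then u i else 0) with hvdef
    have hvmem : ∀ c ∈ Finset.range (p + 1),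
        v c ∈ convexHull ℝ {q : (Fin p → Fin 2 → ℝ) × (Fin p → ℝ) × (Fin p → ℝ) |
          ∃ x ∈ OrbVerts p, q = (xTilde x, yVec x, zVec x)} := by
      intro c hc
      rw [Finset.mem_range] at hc
      simp only [hvdef]
      apply boxpoint_mem_hull c (by omega)
      · intro i j h
        rw [if_pos h]
        exact ⟨(ht01 i j).1, (ht01 i j).2⟩
      · intro i j h
        rw [if_neg h]
      · intro i h
        rw [if_pos h]
        exact ⟨(hu01 i).1, (hu01 i).2⟩
      · intro i h
        rw [if_neg h]
    have hdecomp : q = ∑ c ∈ Finset.range (p + 1), muFun y c • v c := by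
      refine Prod.ext ?_ (Prod.ext ?_ ?_)
      · rw [Prod.fst_sum]
        funext i j
        rw [Finset.sum_apply, Finset.sum_apply]
        have hterm : ∀ c, ((muFun y c • v c).1) i j
            = (if c < (i : ℕ) then muFun y c else 0) * t i j := by
          intro c
          simp only [hvdef, Prod.smul_fst, Pi.smul_apply, smul_eq_mul]
          by_cases h : c < (i : ℕ)
          · rw [if_pos h, if_pos h]
          · rw [if_neg h, if_neg h]; ring
        rw [Finset.sum_congr rfl fun c _ => hterm c, ← Finset.sum_mul, hhead i]
        by_cases h : ySumLT y i = 0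
        · have h0 : q.1 i j = 0 := by
            apply le_antisymm ?_ (F4 i j)
            rw [← h]
            fin_cases j
            · exact F1 i
            · exact F2 i
          rw [h0]
          simp only [htdef]
          rw [if_pos h]
          ring
        · simp only [htdef]
          rw [if_neg h]
          field_simp
      · rw [Prod.snd_sum, Prod.fst_sum]
        funext i
        rw [Finset.sum_apply]
        have hterm : ∀ c, ((muFun y c • v c).2.1) i
            = (if (i : ℕ) = c then muFun y c else 0) := by
          intro c
          simp only [hvdef, Prod.smul_snd, Prod.smul_fst, Pi.smul_apply, smul_eq_mul]
          by_cases h : (i : ℕ) = c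
          · rw [if_pos h, if_pos h]; ring
          · rw [if_neg h, if_neg h]; ring
        rw [Finset.sum_congr rfl fun c _ => hterm c]
        rw [Finset.sum_ite_eq (Finset.range (p + 1)) (i : ℕ) (fun c => muFun y c)]
        rw [if_pos (Finset.mem_range.2 (by have := i.isLt; omega))]
        simp [muFun, i.isLt, hydef]
      · rw [Prod.snd_sum, Prod.snd_sum]
        funext i
        rw [Finset.sum_apply]
        have hterm : ∀ c, ((muFun y c • v c).2.2) i
            = (if (i : ℕ) < c then muFun y c else 0) * u i := by
          intro c
          simp only [hvdef, Prod.smul_snd, Pi.smul_apply, smul_eq_mul]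
          by_cases h : (i : ℕ) < c
          · rw [if_pos h, if_pos h]
          · rw [if_neg h, if_neg h]; ring
        rw [Finset.sum_congr rfl fun c _ => hterm c, ← Finset.sum_mul, htail i]
        by_cases h : 1 - ySumLE y i = 0
        · have h0 : z i = 0 := by
            apply le_antisymm ?_ (F6 i)
            rw [← h]
            exact hzle i
          show z i = _
          rw [h0]
          simp only [hudef]
          rw [if_pos h]
          ring
        · show z i = _
          simp only [hudef]
          rw [if_neg h]
          field_simp
    rw [hdecomp]
    exact (convex_convexHull ℝ _).sum_mem hmu0 hmusum hvmem
end

section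
/- The polytope Q_p^{x,y} = conv{(x, y(x)) : x a vertex of Orb(p)} equals the set of (x,y) ∈ ℝ^{p×2} × ℝ^p satisfying, for each i ∈ [p]: x_{i,1} ≤ 1; x_{i,2} ≥ 0; y_i ≥ 0; y_i ≥ x_{i,1} − x_{i,2} − Σ_{k<i} y_k; y_i ≤ x_{i,1}; y_i ≤ 1 − x_{i,2}; y_i ≤ x_{i,1} − x_{i,2} + Σ_{k<i} y_k; and y_i ≤ 1 − Σ_{k<i} y_k. -/
open scoped Classical
open Finset

noncomputable section
namespace QxyAux
open Finset

variable {p : ℕ}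

lemma critRow_le (x : Fin p → Fin 2 → ℝ) : critRow x ≤ p := Nat.sInf_le (Or.inr rfl)

lemma critRow_spec (x : Fin p → Fin 2 → ℝ) (h : critRow x < p) :
    x ⟨critRow x, h⟩ 0 = 1 ∧ x ⟨critRow x, h⟩ 1 = 0 := by
  have hne : ({i : ℕ | ∃ h : i < p, x ⟨i, h⟩ 0 = 1 ∧ x ⟨i, h⟩ 1 = 0} ∪ {p}).Nonempty :=
    ⟨p, Or.inr rfl⟩
  have hmem := Nat.sInf_mem hne
  rcases hmem with h' | h'
  · obtain ⟨hlt, h1, h2⟩ := h'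
    exact ⟨h1, h2⟩
  · simp only [Set.mem_singleton_iff] at h'
    rw [critRow] at h
    omega

lemma critRow_eq_of (x : Fin p → Fin 2 → ℝ) (i : ℕ) (hip : i ≤ p)
    (hmem : i = p ∨ ∃ h : i < p, x ⟨i, h⟩ 0 = 1 ∧ x ⟨i, h⟩ 1 = 0)
    (hlow : ∀ j (hj : j < p), j < i → ¬(x ⟨j, hj⟩ 0 = 1 ∧ x ⟨j, hj⟩ 1 = 0)) :
    critRow x = i := by
  have hle : critRow x ≤ i := by
    apply Nat.sInf_le
    rcases hmem with rfl | h
    · exact Or.inr rfl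
    · exact Or.inl h
  have hne : ({j : ℕ | ∃ h : j < p, x ⟨j, h⟩ 0 = 1 ∧ x ⟨j, h⟩ 1 = 0} ∪ {p}).Nonempty :=
    ⟨p, Or.inr rfl⟩
  have hmem2 := Nat.sInf_mem hne
  rcases hmem2 with h' | h'
  · obtain ⟨hlt, h1, h2⟩ := h'
    by_contra hne2
    have hlt2 : critRow x < i := lt_of_le_of_ne hle hne2
    exact hlow _ hlt hlt2 ⟨h1, h2⟩
  · simp only [Set.mem_singleton_iff] at h'
    rw [critRow] at hle ⊢
    omega

lemma eq_before_crit {x : Fin p → Fin 2 → ℝ} (hx : x ∈ OrbVerts p) :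
    ∀ k : Fin p, (k : ℕ) < critRow x → x k 0 = x k 1 := by
  have H : ∀ n : ℕ, ∀ k : Fin p, (k : ℕ) = n → (k : ℕ) < critRow x → x k 0 = x k 1 := by
    intro n
    induction n using Nat.strong_induction_on with
    | _ n ih =>
      intro k hkn hkc
      have hprev : ∀ k' : Fin p, k' < k → x k' 0 = x k' 1 := by
        intro k' hk'
        have hcoe : (k' : ℕ) < (k : ℕ) := hk'
        exact ih (k' : ℕ) (by omega) k' rfl (by omega)
      have hle := hx.2 k hprev
      rcases hx.1 k 0 with h0 | h0 <;> rcases hx.1 k 1 with h1 | h1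
      · rw [h0, h1]
      · exfalso; rw [h0, h1] at hle; linarith
      · exfalso
        have hk2 : (k : ℕ) ∈ ({i : ℕ | ∃ h : i < p, x ⟨i, h⟩ 0 = 1 ∧ x ⟨i, h⟩ 1 = 0} ∪ {p}) := by
          left
          exact ⟨k.2, by simpa using h0, by simpa using h1⟩
        have := Nat.sInf_le hk2
        rw [← critRow] at this
        omega
      · rw [h0, h1]
  intro k hk
  exact H (k : ℕ) k rfl hk

lemma ySumLT_yVec (x : Fin p → Fin 2 → ℝ) (i : Fin p) :
    ySumLT (yVec x) i = if critRow x < (i : ℕ) then 1 else 0 := by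
  classical
  unfold ySumLT yVec
  by_cases hci : critRow x < (i : ℕ)
  · have hcp : critRow x < p := lt_trans hci i.2
    rw [if_pos hci]
    rw [Finset.sum_eq_single (⟨critRow x, hcp⟩ : Fin p)]
    · simp
    · intro b hb hne
      rw [if_neg]
      intro hbc
      exact hne (Fin.ext hbc)
    · intro h
      exfalso
      apply h
      simp only [Finset.mem_filter, Finset.mem_univ, true_and]
      exact hci
  · rw [if_neg hci, Finset.sum_eq_zero]
    intro k hk
    simp only [Finset.mem_filter, Finset.mem_univ, true_and] at hk
    have hkc : (k : ℕ) < (i : ℕ) := hk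
    rw [if_neg (by omega)]

lemma vert_mem_Qxy {x : Fin p → Fin 2 → ℝ} (hx : x ∈ OrbVerts p) :
    ((x, yVec x) : (Fin p → Fin 2 → ℝ) × (Fin p → ℝ)) ∈ QxySystem p := by
  intro i
  have hb : ∀ (k : Fin p) j, (0:ℝ) ≤ x k j ∧ x k j ≤ 1 := by
    intro k j; rcases hx.1 k j with h | h <;> simp [h]
  obtain ⟨h00, h01⟩ := hb i 0
  obtain ⟨h10, h11⟩ := hb i 1
  have hS := ySumLT_yVec x i
  have hyv : yVec x i = if (i : ℕ) = critRow x then 1 else 0 := rfl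
  dsimp only
  rcases lt_trichotomy ((i : ℕ)) (critRow x) with hic | hic | hic
  · have heq := eq_before_crit hx i hic
    rw [if_neg (by omega)] at hyv
    rw [if_neg (by omega)] at hS
    rw [hyv, hS]
    refine ⟨h01, h10, le_refl 0, by linarith, by linarith, by linarith, by linarith, by linarith⟩
  · have hcp : critRow x < p := by omega
    obtain ⟨hv0, hv1⟩ := critRow_spec x hcp
    have hx0 : x i 0 = 1 := by
      have : i = ⟨critRow x, hcp⟩ := Fin.ext hic
      rw [this]; exact hv0
    have hx1 : x i 1 = 0 := by
      have : i = ⟨critRow x, hcp⟩ := Fin.ext hic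
      rw [this]; exact hv1
    rw [if_pos hic] at hyv
    rw [if_neg (by omega)] at hS
    rw [hyv, hS, hx0, hx1]
    norm_num
  · rw [if_neg (by omega)] at hyv
    rw [if_pos hic] at hS
    rw [hyv, hS]
    refine ⟨h01, h10, le_refl 0, by linarith, by linarith, by linarith, by linarith, by linarith⟩

lemma ySumLT_nonneg {y : Fin p → ℝ} (hy : ∀ k, 0 ≤ y k) (i : Fin p) : 0 ≤ ySumLT y i :=
  Finset.sum_nonneg fun k _ => hy k

lemma convex_Qxy : Convex ℝ (QxySystem p) := by
  intro u hu v hv a b ha hb hab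
  intro i
  obtain ⟨a1, a2, a3, a4, a5, a6, a7, a8⟩ := hu i
  obtain ⟨b1, b2, b3, b4, b5, b6, b7, b8⟩ := hv i
  have h1 : (a • u + b • v).1 = a • u.1 + b • v.1 := rfl
  have h2 : (a • u + b • v).2 = a • u.2 + b • v.2 := rfl
  have hsum : ySumLT (a • u + b • v).2 i = a * ySumLT u.2 i + b * ySumLT v.2 i := by
    rw [h2]
    simp [ySumLT, Finset.sum_add_distrib, Finset.mul_sum]
  rw [hsum, h1, h2]
  simp only [Pi.add_apply, Pi.smul_apply, smul_eq_mul]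
  refine ⟨?_, ?_, ?_, ?_, ?_, ?_, ?_, ?_⟩ <;> nlinarith

-- === hard direction auxiliaries (to be appended inside namespace QxyAux) ===

def Tv (y : Fin p → ℝ) (k : Fin p) : ℝ := 1 - ySumLT y k - y k

def Zv (x : Fin p → Fin 2 → ℝ) (y : Fin p → ℝ) (k : Fin p) : ℝ :=
  min (min (Tv y k) (x k 0 - y k)) (x k 1)

def zk (x : Fin p → Fin 2 → ℝ) (y : Fin p → ℝ) (k : Fin p) : ℝ :=
  if Tv y k = 0 then 0 else Zv x y k / Tv y k

def ak (x : Fin p → Fin 2 → ℝ) (y : Fin p → ℝ) (k : Fin p) : ℝ :=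
  if ySumLT y k = 0 then 0 else (x k 0 - y k - Zv x y k) / ySumLT y k

def bk (x : Fin p → Fin 2 → ℝ) (y : Fin p → ℝ) (k : Fin p) : ℝ :=
  if ySumLT y k = 0 then 0 else (x k 1 - Zv x y k) / ySumLT y k

def Wmat (x : Fin p → Fin 2 → ℝ) (y : Fin p → ℝ) (i : ℕ) : Fin p → Fin 2 → ℝ :=
  fun k j => if (k : ℕ) < i then zk x y k else if j = 0 then ak x y k else bk x y k

lemma Zv_bounds {x : Fin p → Fin 2 → ℝ} {y : Fin p → ℝ}
    (hw : ((x, y) : (Fin p → Fin 2 → ℝ) × (Fin p → ℝ)) ∈ QxySystem p) (k : Fin p) :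
    0 ≤ Zv x y k ∧ Zv x y k ≤ Tv y k ∧ Zv x y k ≤ x k 0 - y k ∧ Zv x y k ≤ x k 1 ∧
    x k 0 - y k - ySumLT y k ≤ Zv x y k ∧ x k 1 - ySumLT y k ≤ Zv x y k := by
  obtain ⟨c1, c2, c3, c4, c5, c6, c7, c8⟩ := hw k
  have hS0 : 0 ≤ ySumLT y k := ySumLT_nonneg (fun k' => (hw k').2.2.1) k
  have hT0 : 0 ≤ Tv y k := by unfold Tv; dsimp only at c8; linarith
  dsimp only at c1 c2 c3 c4 c5 c6 c7 c8
  refine ⟨le_min (le_min hT0 (by linarith)) (by linarith), ?_, ?_, ?_, ?_, ?_⟩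
  · exact le_trans (min_le_left _ _) (min_le_left _ _)
  · exact le_trans (min_le_left _ _) (min_le_right _ _)
  · exact min_le_right _ _
  · refine le_min (le_min ?_ ?_) ?_ <;> (try simp only [Tv]) <;> linarith
  · refine le_min (le_min ?_ ?_) ?_ <;> (try simp only [Tv]) <;> linarith

lemma zk_mem {x : Fin p → Fin 2 → ℝ} {y : Fin p → ℝ}
    (hw : ((x, y) : (Fin p → Fin 2 → ℝ) × (Fin p → ℝ)) ∈ QxySystem p) (k : Fin p) :
    0 ≤ zk x y k ∧ zk x y k ≤ 1 := by
  obtain ⟨h0, h1, _, _, _, _⟩ := Zv_bounds hw k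
  unfold zk
  split_ifs with h
  · norm_num
  · have hT : 0 < Tv y k := lt_of_le_of_ne (le_trans h0 h1) (Ne.symm h)
    exact ⟨div_nonneg h0 hT.le, (div_le_one hT).mpr h1⟩

lemma ak_mem {x : Fin p → Fin 2 → ℝ} {y : Fin p → ℝ}
    (hw : ((x, y) : (Fin p → Fin 2 → ℝ) × (Fin p → ℝ)) ∈ QxySystem p) (k : Fin p) :
    0 ≤ ak x y k ∧ ak x y k ≤ 1 := by
  obtain ⟨h0, h1, h2, h3, h4, h5⟩ := Zv_bounds hw k
  have hS0 : 0 ≤ ySumLT y k := ySumLT_nonneg (fun k' => (hw k').2.2.1) k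
  unfold ak
  split_ifs with h
  · norm_num
  · have hS : 0 < ySumLT y k := lt_of_le_of_ne hS0 (Ne.symm h)
    exact ⟨div_nonneg (by linarith) hS.le, (div_le_one hS).mpr (by linarith)⟩

lemma bk_mem {x : Fin p → Fin 2 → ℝ} {y : Fin p → ℝ}
    (hw : ((x, y) : (Fin p → Fin 2 → ℝ) × (Fin p → ℝ)) ∈ QxySystem p) (k : Fin p) :
    0 ≤ bk x y k ∧ bk x y k ≤ 1 := by
  obtain ⟨h0, h1, h2, h3, h4, h5⟩ := Zv_bounds hw k
  have hS0 : 0 ≤ ySumLT y k := ySumLT_nonneg (fun k' => (hw k').2.2.1) k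
  unfold bk
  split_ifs with h
  · norm_num
  · have hS : 0 < ySumLT y k := lt_of_le_of_ne hS0 (Ne.symm h)
    exact ⟨div_nonneg (by linarith) hS.le, (div_le_one hS).mpr (by linarith)⟩

lemma zk_mul {x : Fin p → Fin 2 → ℝ} {y : Fin p → ℝ}
    (hw : ((x, y) : (Fin p → Fin 2 → ℝ) × (Fin p → ℝ)) ∈ QxySystem p) (k : Fin p) :
    zk x y k * Tv y k = Zv x y k := by
  obtain ⟨h0, h1, _, _, _, _⟩ := Zv_bounds hw k
  unfold zk
  split_ifs with h
  · rw [h]; linarith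
  · exact div_mul_cancel₀ _ h

lemma ak_mul {x : Fin p → Fin 2 → ℝ} {y : Fin p → ℝ}
    (hw : ((x, y) : (Fin p → Fin 2 → ℝ) × (Fin p → ℝ)) ∈ QxySystem p) (k : Fin p) :
    ak x y k * ySumLT y k = x k 0 - y k - Zv x y k := by
  obtain ⟨h0, h1, h2, h3, h4, h5⟩ := Zv_bounds hw k
  unfold ak
  split_ifs with h
  · rw [h] at h4 ⊢; linarith
  · exact div_mul_cancel₀ _ h

lemma bk_mul {x : Fin p → Fin 2 → ℝ} {y : Fin p → ℝ}
    (hw : ((x, y) : (Fin p → Fin 2 → ℝ) × (Fin p → ℝ)) ∈ QxySystem p) (k : Fin p) :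
    bk x y k * ySumLT y k = x k 1 - Zv x y k := by
  obtain ⟨h0, h1, h2, h3, h4, h5⟩ := Zv_bounds hw k
  unfold bk
  split_ifs with h
  · rw [h] at h5 ⊢; linarith
  · exact div_mul_cancel₀ _ h

lemma sum_split (f : Fin p → ℝ) (k : Fin p) :
    ∑ j, f j = (∑ j ∈ Finset.univ.filter (fun j => j < k), f j) + f k
      + ∑ j ∈ Finset.univ.filter (fun j => k < j), f j := by
  classical
  rw [← Finset.sum_filter_add_sum_filter_not Finset.univ (fun j => j < k) f]
  have hset : Finset.univ.filter (fun j : Fin p => ¬ j < k)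
      = insert k (Finset.univ.filter (fun j : Fin p => k < j)) := by
    ext j
    simp only [Finset.mem_filter, Finset.mem_univ, true_and, Finset.mem_insert,
      Fin.lt_def, Fin.ext_iff]
    omega
  rw [hset, Finset.sum_insert (by simp only [Finset.mem_filter, Finset.mem_univ, true_and]; exact lt_irrefl k)]
  ring


def vertF (p i : ℕ) (w : Fin p → Fin 2 → ℝ) : (Fin p → Fin 2 → ℝ) × (Fin p → ℝ) :=
  (fun k j => if (k : ℕ) < i then w k 0
    else if (k : ℕ) = i then (if j = 0 then 1 else 0) else w k j,
   fun k => if (k : ℕ) = i then 1 else 0)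

def vertL (p i : ℕ) : (Fin p → Fin 2 → ℝ) →ₗ[ℝ] ((Fin p → Fin 2 → ℝ) × (Fin p → ℝ)) where
  toFun w := (fun k j => if (k : ℕ) < i then w k 0 else if (k : ℕ) = i then 0 else w k j,
              fun _ => 0)
  map_add' u v := by
    refine Prod.ext ?_ ?_ <;> funext k
    · funext j; simp only [Pi.add_apply, Prod.fst]; split_ifs <;> simp [*]
    · simp
  map_smul' a u := by
    refine Prod.ext ?_ ?_ <;> funext k
    · funext j; simp only [Pi.smul_apply, smul_eq_mul, RingHom.id_apply, Prod.fst]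
      split_ifs <;> simp [*]
    · simp

def vertAff (p i : ℕ) : (Fin p → Fin 2 → ℝ) →ᵃ[ℝ] ((Fin p → Fin 2 → ℝ) × (Fin p → ℝ)) where
  toFun := vertF p i
  linear := vertL p i
  map_vadd' pt v := by
    refine Prod.ext ?_ ?_ <;> funext k
    · funext j
      simp only [vertF, vertL, LinearMap.coe_mk, AddHom.coe_mk, Pi.add_apply, Prod.fst,
        vadd_eq_add, Pi.vadd_apply]
      split_ifs <;> simp [*]
    · simp [vertF, vertL]

def Cube (p : ℕ) : Set (Fin p → Fin 2 → ℝ) :=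
  Set.univ.pi (fun _ : Fin p => Set.univ.pi (fun _ : Fin 2 => ({0, 1} : Set ℝ)))

lemma mem_convexHull_Cube (w : Fin p → Fin 2 → ℝ)
    (h : ∀ k j, 0 ≤ w k j ∧ w k j ≤ 1) : w ∈ convexHull ℝ (Cube p) := by
  rw [Cube, convexHull_pi]
  intro k _
  rw [convexHull_pi]
  intro j _
  rw [convexHull_pair, segment_eq_Icc zero_le_one]
  exact ⟨(h k j).1, (h k j).2⟩

def VertSet (p : ℕ) : Set ((Fin p → Fin 2 → ℝ) × (Fin p → ℝ)) :=
  {q | ∃ x ∈ OrbVerts p, q = (x, yVec x)}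

lemma vertF_mem (i : ℕ) (hip : i ≤ p) {w : Fin p → Fin 2 → ℝ} (hwc : w ∈ Cube p) :
    vertF p i w ∈ VertSet p := by
  have h01 : ∀ (k : Fin p) (j : Fin 2), w k j = 0 ∨ w k j = 1 := by
    intro k j
    have := hwc k (Set.mem_univ k) j (Set.mem_univ j)
    simpa using this
  set xv : Fin p → Fin 2 → ℝ := (vertF p i w).1 with hxv
  have hxvdef : ∀ (k : Fin p) (j : Fin 2), xv k j = if (k : ℕ) < i then w k 0
      else if (k : ℕ) = i then (if j = 0 then 1 else 0) else w k j := fun k j => rfl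
  have hOrb : xv ∈ OrbVerts p := by
    constructor
    · intro k j
      rw [hxvdef]
      split_ifs
      · exact h01 k 0
      · right; rfl
      · left; rfl
      · exact h01 k j
    · intro k hprev
      rcases lt_trichotomy ((k : ℕ)) i with h | h | h
      · rw [hxvdef, hxvdef, if_pos h, if_pos h]
      · rw [hxvdef, hxvdef]
        simp [h]
      · have hik : i < p := lt_trans h k.2
        have hcontr := hprev ⟨i, hik⟩ (show (⟨i, hik⟩ : Fin p) < k from h)
        rw [hxvdef, hxvdef] at hcontr
        simp only [lt_irrefl, if_neg, if_pos] at hcontr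
        norm_num at hcontr
  have hcrit : critRow xv = i := by
    apply critRow_eq_of xv i hip
    · rcases lt_or_eq_of_le hip with h | h
      · right
        refine ⟨h, ?_, ?_⟩ <;> rw [hxvdef] <;> simp
      · left; omega
    · intro j hj hji hcontra
      obtain ⟨e1, e2⟩ := hcontra
      rw [hxvdef, if_pos hji] at e1
      rw [hxvdef, if_pos hji] at e2
      rw [e1] at e2
      norm_num at e2
  refine ⟨xv, hOrb, ?_⟩
  refine Prod.ext rfl ?_
  funext k
  show (fun k => if (k : ℕ) = i then (1:ℝ) else 0) k = yVec xv k
  rw [yVec, hcrit]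

lemma q_mem_hull (i : ℕ) (hip : i ≤ p) {x : Fin p → Fin 2 → ℝ} {y : Fin p → ℝ}
    (hw : ((x, y) : (Fin p → Fin 2 → ℝ) × (Fin p → ℝ)) ∈ QxySystem p) :
    vertF p i (Wmat x y i) ∈ convexHull ℝ (VertSet p) := by
  have hWc : Wmat x y i ∈ convexHull ℝ (Cube p) := by
    apply mem_convexHull_Cube
    intro k j
    unfold Wmat
    split_ifs
    · exact zk_mem hw k
    · exact ak_mem hw k
    · exact bk_mem hw k
  have himg : vertF p i (Wmat x y i) ∈ (vertAff p i) '' (convexHull ℝ (Cube p)) :=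
    ⟨_, hWc, rfl⟩
  rw [AffineMap.image_convexHull] at himg
  refine convexHull_mono ?_ himg
  rintro q ⟨w, hwc, rfl⟩
  exact vertF_mem i hip hwc

lemma total_le_one {x : Fin p → Fin 2 → ℝ} {y : Fin p → ℝ}
    (hw : ((x, y) : (Fin p → Fin 2 → ℝ) × (Fin p → ℝ)) ∈ QxySystem p) :
    ∑ k, y k ≤ 1 := by
  rcases Nat.eq_zero_or_pos p with hp | hp
  · subst hp; simp
  · set k : Fin p := ⟨p - 1, by omega⟩ with hk
    have hsp := sum_split y k
    have hempty : Finset.univ.filter (fun j : Fin p => k < j) = ∅ := by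
      ext j
      simp only [Finset.mem_filter, Finset.mem_univ, true_and, Finset.notMem_empty,
        iff_false, Fin.lt_def, not_lt]
      have h2 := j.2
      have hkv : (k : ℕ) = p - 1 := rfl
      omega
    have c8 := (hw k).2.2.2.2.2.2.2
    dsimp only at c8
    rw [hempty, Finset.sum_empty] at hsp
    have hSdef : ySumLT y k = ∑ j ∈ Finset.univ.filter (fun j => j < k), y j := rfl
    linarith


def iOf {p : ℕ} (o : Option (Fin p)) : ℕ := Option.elim o p (fun j => (j : ℕ))

def lamF (y : Fin p → ℝ) : Option (Fin p) → ℝ := fun o => Option.elim o (1 - ∑ k, y k) y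

def qF (x : Fin p → Fin 2 → ℝ) (y : Fin p → ℝ) (o : Option (Fin p)) :
    (Fin p → Fin 2 → ℝ) × (Fin p → ℝ) := vertF p (iOf o) (Wmat x y (iOf o))

lemma qF_fst (x : Fin p → Fin 2 → ℝ) (y : Fin p → ℝ) (o : Option (Fin p)) (k : Fin p)
    (col : Fin 2) :
    (qF x y o).1 k col = if (k : ℕ) < iOf o then zk x y k
      else if (k : ℕ) = iOf o then (if col = 0 then 1 else 0)
      else (if col = 0 then ak x y k else bk x y k) := by
  show (if (k : ℕ) < iOf o then Wmat x y (iOf o) k 0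
      else if (k : ℕ) = iOf o then (if col = 0 then 1 else 0)
      else Wmat x y (iOf o) k col) = _
  rcases lt_trichotomy ((k : ℕ)) (iOf o) with h | h | h
  · rw [if_pos h, if_pos h]
    show (if (k : ℕ) < iOf o then zk x y k else _) = _
    rw [if_pos h]
  · have hn : ¬ (k : ℕ) < iOf o := by omega
    rw [if_neg hn, if_neg hn, if_pos h, if_pos h]
  · have hn : ¬ (k : ℕ) < iOf o := by omega
    have hn2 : ¬ (k : ℕ) = iOf o := by omega
    rw [if_neg hn, if_neg hn, if_neg hn2, if_neg hn2]
    show (if (k : ℕ) < iOf o then zk x y k else if col = 0 then ak x y k else bk x y k) = _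
    rw [if_neg hn]

lemma sum_some (z e gk : ℝ) (y : Fin p → ℝ) (k : Fin p) :
    ∑ j : Fin p, y j * (if (k : ℕ) < (j : ℕ) then z else if (k : ℕ) = (j : ℕ) then e else gk)
      = (∑ j ∈ Finset.univ.filter (fun j => j < k), y j) * gk + y k * e
        + (∑ j ∈ Finset.univ.filter (fun j => k < j), y j) * z := by
  rw [sum_split _ k]
  congr 1
  · congr 1
    · rw [Finset.sum_mul]
      apply Finset.sum_congr rfl
      intro j hj
      have hj' : (j : ℕ) < (k : ℕ) := Fin.lt_def.mp (Finset.mem_filter.mp hj).2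
      rw [if_neg (by omega), if_neg (by omega)]
    · rw [if_neg (by omega), if_pos rfl]
  · rw [Finset.sum_mul]
    apply Finset.sum_congr rfl
    intro j hj
    have hj' : (k : ℕ) < (j : ℕ) := Fin.lt_def.mp (Finset.mem_filter.mp hj).2
    rw [if_pos hj']

lemma key {x : Fin p → Fin 2 → ℝ} {y : Fin p → ℝ}
    (hw : ((x, y) : (Fin p → Fin 2 → ℝ) × (Fin p → ℝ)) ∈ QxySystem p) :
    ((x, y) : (Fin p → Fin 2 → ℝ) × (Fin p → ℝ))
      = ∑ o : Option (Fin p), lamF y o • qF x y o := by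
  have hTv : ∀ k : Fin p, Tv y k = 1 - ySumLT y k - y k := fun _ => rfl
  have hSdef : ∀ k : Fin p, ySumLT y k
      = ∑ j ∈ Finset.univ.filter (fun j => j < k), y j := fun _ => rfl
  refine Prod.ext ?_ ?_
  · funext k col
    have hr : (∑ o : Option (Fin p), lamF y o • qF x y o).1 k col
        = ∑ o : Option (Fin p), lamF y o * (qF x y o).1 k col := by
      simp only [Prod.fst_sum, Prod.smul_fst, Finset.sum_apply, Pi.smul_apply, smul_eq_mul]
    show x k col = _
    rw [hr, Fintype.sum_option]
    have hkp : (k : ℕ) < p := k.2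
    have hnone : (qF x y none).1 k col = zk x y k := by
      rw [qF_fst]
      show (if (k : ℕ) < p then zk x y k else _) = _
      rw [if_pos hkp]
    have hlamnone : lamF y none = 1 - ∑ k, y k := rfl
    have hz := zk_mul hw k
    rw [hTv k, hSdef k] at hz
    have hsplit := sum_split y k
    by_cases hcol : col = 0
    · subst hcol
      have hsome : ∀ j : Fin p, lamF y (some j) * (qF x y (some j)).1 k 0
          = y j * (if (k : ℕ) < (j : ℕ) then zk x y k
              else if (k : ℕ) = (j : ℕ) then 1 else ak x y k) := by
        intro j
        rw [qF_fst]
        have h1 : iOf (some j) = (j : ℕ) := rfl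
        have h2 : lamF y (some j) = y j := rfl
        rw [h1, h2]
        norm_num
      rw [hnone, hlamnone, Finset.sum_congr rfl (fun j _ => hsome j),
        sum_some (zk x y k) 1 (ak x y k) y k]
      have ha := ak_mul hw k
      rw [hSdef k] at ha
      linear_combination (-1 : ℝ) * hz - ha + zk x y k * hsplit
    · have hcol1 : col = 1 := by
        have h2 : (col : ℕ) < 2 := col.2
        have h0 : (col : ℕ) ≠ 0 := fun hc => hcol (Fin.ext hc)
        exact Fin.ext (by omega)
      subst hcol1
      have hsome : ∀ j : Fin p, lamF y (some j) * (qF x y (some j)).1 k 1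
          = y j * (if (k : ℕ) < (j : ℕ) then zk x y k
              else if (k : ℕ) = (j : ℕ) then 0 else bk x y k) := by
        intro j
        rw [qF_fst]
        have h1 : iOf (some j) = (j : ℕ) := rfl
        have h2 : lamF y (some j) = y j := rfl
        rw [h1, h2]
        norm_num
      rw [hnone, hlamnone, Finset.sum_congr rfl (fun j _ => hsome j),
        sum_some (zk x y k) 0 (bk x y k) y k]
      have hb := bk_mul hw k
      rw [hSdef k] at hb
      linear_combination (-1 : ℝ) * hz - hb + zk x y k * hsplit
  · funext k
    have hr : (∑ o : Option (Fin p), lamF y o • qF x y o).2 k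
        = ∑ o : Option (Fin p), lamF y o * (qF x y o).2 k := by
      simp only [Prod.snd_sum, Prod.smul_snd, Finset.sum_apply, Pi.smul_apply, smul_eq_mul]
    show y k = _
    rw [hr, Fintype.sum_option]
    have hnone : (qF x y none).2 k = 0 := by
      show (if (k : ℕ) = p then (1 : ℝ) else 0) = 0
      have := k.2
      rw [if_neg (by omega)]
    rw [hnone, mul_zero, zero_add]
    have hsome : ∀ j : Fin p, lamF y (some j) * (qF x y (some j)).2 k
        = if j = k then y j else 0 := by
      intro j
      show y j * (if (k : ℕ) = (j : ℕ) then 1 else 0) = _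
      by_cases h : j = k
      · rw [if_pos (by rw [h]), if_pos h, mul_one]
      · rw [if_neg (fun hc => h (Fin.ext hc.symm)), if_neg h, mul_zero]
    rw [Finset.sum_congr rfl (fun j _ => hsome j), Finset.sum_ite_eq' Finset.univ k y]
    simp

theorem Qxy_main (p : ℕ) : convexHull ℝ (VertSet p) = QxySystem p := by
  apply Set.Subset.antisymm
  · refine convexHull_min ?_ convex_Qxy
    rintro q ⟨x, hx, rfl⟩
    exact vert_mem_Qxy hx
  · rintro ⟨x, y⟩ hw
    rw [key hw]
    apply Convex.sum_mem (convex_convexHull ℝ _)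
    · rintro (_ | j) -
      · have := total_le_one hw
        show 0 ≤ 1 - ∑ k, y k
        linarith
      · exact (hw j).2.2.1
    · rw [Fintype.sum_option]
      show (1 - ∑ k, y k) + ∑ j : Fin p, y j = 1
      ring
    · rintro (_ | j) -
      · exact q_mem_hull p le_rfl hw
      · exact q_mem_hull (j : ℕ) (le_of_lt j.2) hw

end QxyAux

/-- Linear description of the polytope `Q_p^{x,y}`. -/
theorem Qxy_description (p : ℕ) :
    convexHull ℝ {q : (Fin p → Fin 2 → ℝ) × (Fin p → ℝ) |
        ∃ x ∈ OrbVerts p, q = (x, yVec x)} = QxySystem p :=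
  QxyAux.Qxy_main p
end
end

section
/- For x ∈ [0,1]^{p×2}, define y ∈ ℝ^p inductively by y_i = min{x_{i,1}, 1 − x_{i,2}, x_{i,1} − x_{i,2} + Σ_{k<i} y_k, 1 − Σ_{k<i} y_k}. If x additionally satisfies all block inequalities ⟨−a(τ), x⟩ ≤ β(τ) for feasible vectors τ, then (x, y) satisfies y_i ≥ 0 and y_i ≥ x_{i,1} − x_{i,2} − Σ_{k<i} y_k for all i ∈ [p], and hence (x,y) ∈ Q_p^{x,y}. -/
open scoped Classical
open Finset

lemma alphaFun_self (τ : ℕ → ℕ) (s : ℕ) : alphaFun τ s s = 1 := by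
  rw [alphaFun]; simp

lemma alphaFun_pred (τ : ℕ → ℕ) (s i : ℕ) (h : i + 1 = s) : alphaFun τ s i = 1 := by
  rw [alphaFun]; simp [h]; omega

lemma alphaFun_step (τ : ℕ → ℕ) (s i : ℕ) (h1 : i + 1 < s) :
    alphaFun τ s i = (if τ (i+1) = 3 then 2 else 1) * alphaFun τ s (i+1) := by
  rw [alphaFun]
  have h2 : ¬ s < i := by omega
  have h3 : ¬ (i = s ∨ i + 1 = s) := by omega
  rw [if_neg h2, if_neg h3]
  split <;> simp

/-- Extension of `y` by zero. -/
def Yext (p : ℕ) (y : Fin p → ℝ) : ℕ → ℝ := fun k => if h : k < p then y ⟨k, h⟩ else 0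

/-- Extension of `x` by zero. -/
def Xext (p : ℕ) (x : Fin p → Fin 2 → ℝ) : ℕ → Fin 2 → ℝ :=
  fun k j => if h : k < p then x ⟨k, h⟩ j else 0

/-- Partial sums of `Yext`. -/
def Tsum (p : ℕ) (y : Fin p → ℝ) : ℕ → ℝ := fun m => ∑ k ∈ Finset.range m, Yext p y k

lemma Tsum_succ (p : ℕ) (y : Fin p → ℝ) (m : ℕ) :
    Tsum p y (m+1) = Tsum p y m + Yext p y m := Finset.sum_range_succ _ _

lemma ySumLT_eq_Tsum {p : ℕ} (y : Fin p → ℝ) (i : Fin p) :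
    ySumLT y i = Tsum p y (i : ℕ) := by
  rw [ySumLT, Finset.sum_filter]
  have h1 : (∑ k : Fin p, if k < i then y k else 0)
      = ∑ k : Fin p, (fun m => if m < (i : ℕ) then Yext p y m else 0) ((k : ℕ)) := by
    apply Finset.sum_congr rfl
    intro k _
    simp only []
    rcases lt_or_ge (k : ℕ) (i : ℕ) with h | h
    · rw [if_pos h, if_pos (Fin.lt_def.mpr h)]
      simp only [Yext, dif_pos k.isLt, Fin.eta]
    · rw [if_neg (not_lt.2 h), if_neg (fun hc => absurd (Fin.lt_def.mp hc) (not_lt.2 h))]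
  rw [h1, Fin.sum_univ_eq_sum_range (fun m => if m < (i : ℕ) then Yext p y m else 0) p]
  rw [Tsum]
  rw [← Finset.sum_subset (Finset.range_subset_range.2 i.isLt.le)
      (fun m _ hm => if_neg (fun hlt => hm (Finset.mem_range.2 hlt)))]
  exact Finset.sum_congr rfl (fun k hk => if_pos (Finset.mem_range.1 hk))
lemma key_nonneg (p : ℕ) (x : Fin p → Fin 2 → ℝ)
    (h01 : ∀ i j, 0 ≤ x i j ∧ x i j ≤ 1)
    (y : Fin p → ℝ)
    (hy : ∀ i : Fin p, y i =
      min (min (x i 0) (1 - x i 1))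
          (min (x i 0 - x i 1 + ySumLT y i) (1 - ySumLT y i)))
    (hblock : ∀ τ : ℕ → ℕ, FeasibleTau p τ → BlockIneq p τ x) :
    ∀ i : Fin p, 0 ≤ y i := by
  classical
  have hy' : ∀ k, ∀ hk : k < p, Yext p y k =
      min (min (Xext p x k 0) (1 - Xext p x k 1))
          (min (Xext p x k 0 - Xext p x k 1 + Tsum p y k) (1 - Tsum p y k)) := by
    intro k hk
    have h := hy ⟨k, hk⟩
    rw [ySumLT_eq_Tsum] at h
    simpa [Yext, Xext, dif_pos hk] using h
  have hX01 : ∀ k, ∀ j : Fin 2, 0 ≤ Xext p x k j ∧ Xext p x k j ≤ 1 := by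
    intro k j
    unfold Xext
    split
    · exact h01 _ j
    · norm_num
  suffices H : ∀ n, ∀ i : Fin p, (i : ℕ) = n → 0 ≤ y i by
    intro i; exact H (i : ℕ) i rfl
  intro n
  induction n using Nat.strong_induction_on with
  | _ n IH =>
  intro i hi
  subst hi
  set n := (i : ℕ) with hn
  -- induction hypothesis in Yext form
  have hYnn : ∀ k, k < n → 0 ≤ Yext p y k := by
    intro k hk
    have hkp : k < p := lt_trans hk i.isLt
    have := IH k hk ⟨k, hkp⟩ rfl
    simpa [Yext, dif_pos hkp] using this
  -- T facts
  have hTmono : ∀ a b, a ≤ b → b ≤ n → Tsum p y a ≤ Tsum p y b := by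
    intro a b hab hbn
    unfold Tsum
    apply Finset.sum_le_sum_of_subset_of_nonneg (Finset.range_subset_range.2 hab)
    intro k hk _
    exact hYnn k (lt_of_lt_of_le (Finset.mem_range.1 hk) hbn)
  have hT0 : Tsum p y 0 = 0 := by simp [Tsum]
  have hTnn : ∀ m, m ≤ n → 0 ≤ Tsum p y m := by
    intro m hm
    rw [← hT0]
    exact hTmono 0 m (Nat.zero_le _) hm
  have hTle1 : ∀ m, m ≤ n → Tsum p y m ≤ 1 := by
    intro m
    induction m with
    | zero => intro _; rw [hT0]; norm_num
    | succ m ihm =>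
      intro hm
      have hm' : m < n := hm
      have hmp : m < p := lt_trans hm' i.isLt
      have h := hy' m hmp
      have hYle : Yext p y m ≤ 1 - Tsum p y m := by
        rw [h]; exact min_le_of_right_le (min_le_right _ _)
      rw [Tsum_succ]
      linarith
  -- reduce goal to Yext / Xext / Tsum form
  have hgoal : 0 ≤ Yext p y n → 0 ≤ y i := by
    intro h
    simpa [Yext, hn, dif_pos i.isLt] using h
  apply hgoal
  rw [hy' n i.isLt]
  refine le_min (le_min (hX01 n 0).1 (by linarith [(hX01 n 1).2])) (le_min ?_ (by linarith [hTle1 n le_rfl]))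
  -- crux : 0 ≤ X n 0 - X n 1 + T n
  rcases le_or_gt 1 (Tsum p y n) with hc | hc
  · linarith [(hX01 n 0).1, (hX01 n 1).2]
  -- now T n < 1
  have hchoice : ∀ k, k < n →
      Yext p y k = Xext p x k 0 - Xext p x k 1 + Tsum p y k ∨
      Yext p y k = Xext p x k 0 ∨ Yext p y k = 1 - Xext p x k 1 := by
    intro k hk
    have hkp : k < p := lt_trans hk i.isLt
    have h := hy' k hkp
    by_contra hcon
    push_neg at hcon
    obtain ⟨h3, h1, h2⟩ := hcon
    have h4 : Yext p y k = 1 - Tsum p y k := by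
      rcases min_choice (min (Xext p x k 0) (1 - Xext p x k 1))
          (min (Xext p x k 0 - Xext p x k 1 + Tsum p y k) (1 - Tsum p y k)) with hA | hA <;>
        rw [hA] at h <;>
        [rcases min_choice (Xext p x k 0) (1 - Xext p x k 1) with hB | hB;
         rcases min_choice (Xext p x k 0 - Xext p x k 1 + Tsum p y k) (1 - Tsum p y k) with hB | hB] <;>
        rw [hB] at h <;> tauto
    have h5 : Tsum p y (k+1) = 1 := by rw [Tsum_succ, h4]; ring
    have h6 : Tsum p y (k+1) ≤ Tsum p y n := hTmono (k+1) n hk le_rfl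
    linarith
  -- the tau vector
  set τ : ℕ → ℕ := fun k =>
    if k = n then 3
    else if n < k then 0
    else if Yext p y k = Xext p x k 0 - Xext p x k 1 + Tsum p y k then 3
    else if Yext p y k = Xext p x k 0 then 1 else 2
    with hτ
  have hτn : τ n = 3 := by simp [hτ]
  have hτgt : ∀ k, n < k → τ k = 0 := by
    intro k hk
    simp only [hτ]
    rw [if_neg (by omega), if_pos hk]
  have hτlt : ∀ k, k < n → τ k = 1 ∨ τ k = 2 ∨ τ k = 3 := by
    intro k hk
    simp only [hτ]
    rw [if_neg (by omega), if_neg (by omega)]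
    split
    · tauto
    · split <;> tauto
  have hτ0 : τ 0 = 3 := by
    rcases Nat.eq_zero_or_pos n with h | h
    · have : (0 : ℕ) = n := h.symm
      rw [this]; exact hτn
    · have h0p : 0 < p := lt_of_lt_of_le h i.isLt.le
      have hmin := hy' 0 h0p
      have hY0 : Yext p y 0 = Xext p x 0 0 - Xext p x 0 1 + Tsum p y 0 := by
        rw [hmin]
        apply le_antisymm
        · exact min_le_of_right_le (min_le_left _ _)
        · have hx0 := hX01 0 0
          have hx1 := hX01 0 1
          rw [hT0]
          exact le_min (le_min (by linarith) (by linarith)) (le_min (by linarith) (by linarith))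
      simp only [hτ]
      rw [if_neg (by omega), if_neg (by omega), if_pos hY0]
  -- feasibility
  have hfeas : FeasibleTau p τ := by
    refine ⟨hτ0, ?_, ?_, n, i.isLt, ?_, hτn, hτgt⟩
    · intro k _
      simp only [hτ]
      split_ifs <;> omega
    · intro k hk
      exact hτgt k (lt_of_lt_of_le i.isLt hk)
    · intro k hk
      rcases hτlt k hk with h | h | h <;> omega
  have histar : iStar τ = n := by
    apply IsGreatest.csSup_eq
    constructor
    · rw [Set.mem_setOf_eq, hτn]; omega
    · intro k hk
      by_contra hcon
      push_neg at hcon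
      exact hk (hτgt k hcon)
  have hαrel : ∀ j, 1 ≤ j → j < n →
      alphaFun τ n (j-1) = (if τ j = 3 then 2 else 1) * alphaFun τ n j := by
    intro j h1 h2
    have h := alphaFun_step τ n (j-1) (by omega)
    rwa [Nat.sub_add_cancel h1] at h
  set D : ℕ → ℝ := fun k =>
    if τ k = 1 then Xext p x k 0
    else if τ k = 2 then 1 - Xext p x k 1
    else Xext p x k 0 - Xext p x k 1 with hD
  have hDval : ∀ k, k < n → D k = Yext p y k - (if τ k = 3 then Tsum p y k else 0) := by
    intro k hk
    by_cases h3 : Yext p y k = Xext p x k 0 - Xext p x k 1 + Tsum p y k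
    · have hτk : τ k = 3 := by
        simp only [hτ]
        rw [if_neg (by omega), if_neg (by omega), if_pos h3]
      simp only [hD, hτk]
      norm_num
      linarith
    · by_cases h1 : Yext p y k = Xext p x k 0
      · have hτk : τ k = 1 := by
          simp only [hτ]
          rw [if_neg (by omega), if_neg (by omega), if_neg h3, if_pos h1]
        simp only [hD, hτk]
        norm_num [h1]
      · have h2 : Yext p y k = 1 - Xext p x k 1 := by
          rcases hchoice k hk with h | h | h <;> tauto
        have hτk : τ k = 2 := by
          simp only [hτ]
          rw [if_neg (by omega), if_neg (by omega), if_neg h3, if_neg h1]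
        simp only [hD, hτk]
        norm_num [h2]
  have hident : ∀ j, 1 ≤ j → j ≤ n →
      ∑ k ∈ Finset.range j, (alphaFun τ n k : ℝ) * D k
        = (alphaFun τ n (j-1) : ℝ) * Tsum p y j := by
    intro j
    induction j with
    | zero => intro h; exact absurd h (by norm_num)
    | succ j ihj =>
      intro _ hjn
      rcases Nat.eq_zero_or_pos j with hj0 | hj0
      · subst hj0
        rw [Finset.sum_range_one]
        have hn1 : 0 < n := by omega
        have hD0 : D 0 = Yext p y 0 := by
          rw [hDval 0 hn1]
          simp [hτ0, hT0]
        have hT1 : Tsum p y 1 = Yext p y 0 := by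
          rw [Tsum_succ, hT0]; ring
        rw [hD0, hT1]
      · have hjn' : j < n := by omega
        rw [Finset.sum_range_succ, ihj hj0 (le_of_lt hjn')]
        have hrel := hαrel j hj0 hjn'
        have hDj := hDval j hjn'
        have hTs := Tsum_succ p y j
        have hidx : j + 1 - 1 = j := rfl
        rw [hidx]
        by_cases h3 : τ j = 3
        · rw [if_pos h3] at hrel hDj
          have hcast : ((alphaFun τ n (j-1) : ℕ) : ℝ) = 2 * (alphaFun τ n j : ℝ) := by
            exact_mod_cast congrArg (Nat.cast : ℕ → ℝ) hrel
          rw [hcast, hDj, hTs]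
          ring
        · rw [if_neg h3, one_mul] at hrel
          rw [if_neg h3] at hDj
          have hcast : ((alphaFun τ n (j-1) : ℕ) : ℝ) = (alphaFun τ n j : ℝ) := by
            exact_mod_cast congrArg (Nat.cast : ℕ → ℝ) hrel
          rw [hcast, hDj, hTs]
          ring
  -- block inequality
  have hbi := hblock τ hfeas
  rw [BlockIneq, betaTau] at hbi
  have hαt : ∀ m, (alphaTau τ m : ℝ) = (alphaFun τ n m : ℝ) := by
    intro m; rw [alphaTau, histar]
  have hsum : (∑ k : Fin p, (-(aMat τ (k:ℕ) 0) * x k 0 + -(aMat τ (k:ℕ) 1) * x k 1))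
      = ∑ m ∈ Finset.range p, (-(aMat τ m 0) * Xext p x m 0 + -(aMat τ m 1) * Xext p x m 1) := by
    rw [← Fin.sum_univ_eq_sum_range
      (fun m => -(aMat τ m 0) * Xext p x m 0 + -(aMat τ m 1) * Xext p x m 1) p]
    apply Finset.sum_congr rfl
    intro k _
    simp only [Xext, dif_pos k.isLt, Fin.eta]
  rw [hsum] at hbi
  have hsub : 0 ≤ ∑ m ∈ Finset.range p,
      ((if τ m = 2 then (alphaTau τ m : ℝ) else 0)
        - (-(aMat τ m 0) * Xext p x m 0 + -(aMat τ m 1) * Xext p x m 1)) := by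
    rw [Finset.sum_sub_distrib]
    linarith [hbi]
  have hterm : ∀ m ∈ Finset.range p,
      ((if τ m = 2 then (alphaTau τ m : ℝ) else 0)
        - (-(aMat τ m 0) * Xext p x m 0 + -(aMat τ m 1) * Xext p x m 1))
      = (if m ≤ n then (alphaFun τ n m : ℝ) * D m else 0) := by
    intro m _
    rcases lt_or_ge n m with hm | hm
    · rw [if_neg (show ¬ m ≤ n by omega)]
      have h0 : τ m = 0 := hτgt m hm
      simp [aMat, h0]
    · rw [if_pos hm]
      have hτm : τ m = 1 ∨ τ m = 2 ∨ τ m = 3 := by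
        rcases lt_or_eq_of_le hm with hlt | he
        · exact hτlt m hlt
        · right; right; rw [he]; exact hτn
      rcases hτm with h1 | h2 | h3
      · have e0 : aMat τ m 0 = (alphaTau τ m : ℝ) := by simp [aMat, h1]
        have e1 : aMat τ m 1 = 0 := by simp [aMat, h1]
        have eD : D m = Xext p x m 0 := by simp [hD, h1]
        rw [e0, e1, eD, if_neg (show ¬ _ = 2 by omega), hαt]
        ring
      · have e0 : aMat τ m 0 = 0 := by simp [aMat, h2]
        have e1 : aMat τ m 1 = -(alphaTau τ m : ℝ) := by simp [aMat, h2]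
        have eD : D m = 1 - Xext p x m 1 := by simp [hD, h2]
        rw [e0, e1, eD, if_pos h2, hαt]
        ring
      · have e0 : aMat τ m 0 = (alphaTau τ m : ℝ) := by simp [aMat, h3]
        have e1 : aMat τ m 1 = -(alphaTau τ m : ℝ) := by simp [aMat, h3]
        have eD : D m = Xext p x m 0 - Xext p x m 1 := by simp [hD, h3]
        rw [e0, e1, eD, if_neg (show ¬ _ = 2 by omega), hαt]
        ring
  rw [Finset.sum_congr rfl hterm] at hsub
  have hss : ∑ m ∈ Finset.range p, (if m ≤ n then (alphaFun τ n m : ℝ) * D m else 0)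
      = ∑ m ∈ Finset.range (n+1), (alphaFun τ n m : ℝ) * D m := by
    rw [← Finset.sum_subset (Finset.range_subset_range.2 (Nat.succ_le_of_lt i.isLt))
        (fun m _ hm => if_neg (fun hle => hm (Finset.mem_range.2 (by omega))))]
    exact Finset.sum_congr rfl
      (fun m hm => if_pos (Nat.lt_succ_iff.1 (Finset.mem_range.1 hm)))
  rw [hss, Finset.sum_range_succ] at hsub
  have hsn : ∑ m ∈ Finset.range n, (alphaFun τ n m : ℝ) * D m = Tsum p y n := by
    rcases Nat.eq_zero_or_pos n with h0 | h0
    · simp [h0, hT0]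
    · rw [hident n h0 le_rfl, alphaFun_pred τ n (n-1) (by omega)]
      norm_num
  have hDn : D n = Xext p x n 0 - Xext p x n 1 := by
    simp only [hD]
    rw [if_neg (show ¬ τ n = 1 by omega), if_neg (show ¬ τ n = 2 by omega)]
  rw [hsn, hDn, alphaFun_self] at hsub
  norm_num at hsub
  linarith
/-- For `x ∈ [0,1]^{p×2}` and `y` defined inductively by the minimum formula, if `x`
satisfies all block inequalities then `y ≥ 0` and
`y_i ≥ x_{i,1} - x_{i,2} - Σ_{k<i} y_k` hold, and hence `(x,y) ∈ Q_p^{x,y}`. -/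
theorem lifted_point_mem_Qxy (p : ℕ) (x : Fin p → Fin 2 → ℝ)
    (h01 : ∀ i j, 0 ≤ x i j ∧ x i j ≤ 1)
    (y : Fin p → ℝ)
    (hy : ∀ i : Fin p, y i =
      min (min (x i 0) (1 - x i 1))
          (min (x i 0 - x i 1 + ySumLT y i) (1 - ySumLT y i)))
    (hblock : ∀ τ : ℕ → ℕ, FeasibleTau p τ → BlockIneq p τ x) :
    (∀ i : Fin p, 0 ≤ y i ∧ x i 0 - x i 1 - ySumLT y i ≤ y i) ∧
      (x, y) ∈ QxySystem p := by
  have hnn := key_nonneg p x h01 y hy hblock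
  have hS_nonneg : ∀ i : Fin p, 0 ≤ ySumLT y i := by
    intro i
    rw [ySumLT]
    exact Finset.sum_nonneg (fun k _ => hnn k)
  have hmain : ∀ i : Fin p, 0 ≤ y i ∧ x i 0 - x i 1 - ySumLT y i ≤ y i := by
    intro i
    refine ⟨hnn i, ?_⟩
    have hS := hS_nonneg i
    have h0 := h01 i 0
    have h1 := h01 i 1
    rw [hy i]
    exact le_min (le_min (by linarith) (by linarith)) (le_min (by linarith) (by linarith))
  refine ⟨hmain, ?_⟩
  simp only [QxySystem, Set.mem_setOf_eq]
  intro i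
  have h0 := h01 i 0
  have h1 := h01 i 1
  refine ⟨h0.2, h1.1, (hmain i).1, (hmain i).2, ?_, ?_, ?_, ?_⟩
  · rw [hy i]; exact min_le_of_left_le (min_le_left _ _)
  · rw [hy i]; exact min_le_of_left_le (min_le_right _ _)
  · rw [hy i]; exact min_le_of_right_le (min_le_left _ _)
  · rw [hy i]; exact min_le_of_right_le (min_le_right _ _)
end
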